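/- Consider the CD grammar system with forbidden random context entry conditions G = ({A,B,C}, {a}, (P₁,F₁), (P₂,F₂), (P₃,F₃), A) with P₁ = {A → B, A → C, A → A} and F₁ = {B,C}, P₂ = {B → AA, B → B} and F₂ = {A,C}, and P₃ = {C → a, C → C} and F₃ = {A,B}. Then for every k ≥ 1, the language generated by G in the ≥k mode is L(G, ≥k, frc) = {a^{2ⁿ} : n ≥ 0}. -/

import Mathlib

namespace GrammarSystems

/-! Symbols: nonterminals are (encoded as) natural numbers, terminals come from `T`. -/

/-- A symbol is either a nonterminal (a natural number) or a terminal from `T`. -/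
abbrev Sym (T : Type) := ℕ ⊕ T

/-- A sentential form: a word over `N ∪ Σ`. -/
abbrev Word (T : Type) := List (Sym T)

/-- A context-free production `A → y`. -/
structure CFRule (T : Type) where
  lhs : ℕ
  rhs : Word T

/-- A production is erasing if its right-hand side is the empty word `λ`. -/
def CFRule.Erasing {T : Type} (r : CFRule T) : Prop := r.rhs = []

/-- One rewriting step `u = xAz ⇒ xyz = v` using the rule `r = A → y`. -/
def CFRule.Rewrites {T : Type} (r : CFRule T) (u v : Word T) : Prop :=
  ∃ x z : Word T, u = x ++ [Sum.inl r.lhs] ++ z ∧ v = x ++ r.rhs ++ z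

/-- Ordinary one-step context-free derivation of a set (list) of productions. -/
def cfStep {T : Type} (P : List (CFRule T)) (u v : Word T) : Prop :=
  ∃ r ∈ P, r.Rewrites u v

/-- `iter r n u v` : `u` derives `v` in exactly `n` steps of the relation `r`. -/
def iter {α : Type*} (r : α → α → Prop) : ℕ → α → α → Prop
  | 0 => Eq
  | n + 1 => fun u v => ∃ w, r u w ∧ iter r n w v

/-- The derivation modes of CD grammar systems: `≤ k`, `= k`, `≥ k`, `*` and `t`. -/
inductive Mode where
  | le (k : ℕ)
  | eq (k : ℕ)
  | ge (k : ℕ)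
  | star
  | t

/-- The mode relation induced by a one-step derivation relation `r`. -/
def ModeRel {α : Type*} (r : α → α → Prop) : Mode → α → α → Prop
  | .le k => fun u v => ∃ j, 1 ≤ j ∧ j ≤ k ∧ iter r j u v
  | .eq k => iter r k
  | .ge k => fun u v => ∃ j, k ≤ j ∧ iter r j u v
  | .star => Relation.ReflTransGen r
  | .t => fun u v => Relation.ReflTransGen r u v ∧ ∀ w, ¬ r v w

/-- A terminal word viewed as a sentential form. -/
def encodeWord {T : Type} (w : List T) : Word T := w.map Sum.inr

/-- The language generated from start symbol `S` by iterating the relation `step`. -/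
def langOf {T : Type} (step : Word T → Word T → Prop) (S : ℕ) : Language T :=
  {w | Relation.ReflTransGen step [Sum.inl S] (encodeWord w)}

/-! ### Ordered grammars and ordered CD grammar systems -/

/-- A component of an ordered CD grammar system: a finite set of context-free
productions together with a strict order (transitive and asymmetric) on rules. -/
structure OComponent (T : Type) where
  rules : List (CFRule T)
  gt : CFRule T → CFRule T → Prop
  gt_trans : ∀ {p q r}, gt p q → gt q r → gt p r
  gt_asymm : ∀ {p q}, gt p q → ¬ gt q p

/-- One-step derivation of an ordered grammar (component): apply a rule only if
no strictly greater rule has its left-hand side occurring in the sentential form. -/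
def OComponent.Step {T : Type} (C : OComponent T) (u v : Word T) : Prop :=
  ∃ r ∈ C.rules, r.Rewrites u v ∧
    ∀ r' ∈ C.rules, C.gt r' r → Sum.inl r'.lhs ∉ u

/-- A component has no erasing productions. -/
def OComponent.NonErasing {T : Type} (C : OComponent T) : Prop :=
  ∀ r ∈ C.rules, ¬ r.Erasing

/-- An ordered cooperating distributed grammar system (OCDGS). -/
structure OCDGS (T : Type) where
  comps : List (OComponent T)
  start : ℕ

/-- The derivation relation `⇒_{G,m}` of an OCDGS in mode `m`. -/
def OCDGS.SysStep {T : Type} (G : OCDGS T) (m : Mode) (u v : Word T) : Prop :=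
  ∃ C ∈ G.comps, ModeRel C.Step m u v

/-- The language of an OCDGS in mode `m`. -/
def OCDGS.lang {T : Type} (G : OCDGS T) (m : Mode) : Language T :=
  langOf (G.SysStep m) G.start

/-- An OCDGS without erasing productions. -/
def OCDGS.NonErasing {T : Type} (G : OCDGS T) : Prop :=
  ∀ C ∈ G.comps, C.NonErasing

/-- The class `OCD(m)`. -/
def OCD (T : Type) (m : Mode) : Set (Language T) :=
  {L | ∃ G : OCDGS T, L = G.lang m}

/-- The class `OCD^{-λ}(m)`. -/
def OCDne (T : Type) (m : Mode) : Set (Language T) :=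
  {L | ∃ G : OCDGS T, G.NonErasing ∧ L = G.lang m}

/-- The class `OCDₙ(m)`: at most `n` components. -/
def OCDbound (T : Type) (n : ℕ) (m : Mode) : Set (Language T) :=
  {L | ∃ G : OCDGS T, G.comps.length ≤ n ∧ L = G.lang m}

/-- The class `OCDₙ^{-λ}(m)`. -/
def OCDboundNE (T : Type) (n : ℕ) (m : Mode) : Set (Language T) :=
  {L | ∃ G : OCDGS T, G.comps.length ≤ n ∧ G.NonErasing ∧ L = G.lang m}

/-- The class `ORD` of languages of ordered grammars. -/
def ORD (T : Type) : Set (Language T) :=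
  {L | ∃ (C : OComponent T) (S : ℕ), L = langOf C.Step S}

/-- The class `ORD^{-λ}`. -/
def ORDne (T : Type) : Set (Language T) :=
  {L | ∃ (C : OComponent T) (S : ℕ), C.NonErasing ∧ L = langOf C.Step S}

/-! ### Forbidden random context grammars and CD grammar systems -/

/-- A forbidden random context rule `(A → y, F)`. -/
structure FRCRule (T : Type) where
  lhs : ℕ
  rhs : Word T
  forb : Finset ℕ

/-- One-step derivation of a forbidden random context grammar (component). -/
def frcStep {T : Type} (P : List (FRCRule T)) (u v : Word T) : Prop :=
  ∃ r ∈ P, (∃ x z : Word T, u = x ++ [Sum.inl r.lhs] ++ z ∧ v = x ++ r.rhs ++ z) ∧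
    ∀ A ∈ r.forb, Sum.inl A ∉ u

/-- A forbidden random context CD grammar system (fRCCDGS). -/
structure FRCCDGS (T : Type) where
  comps : List (List (FRCRule T))
  start : ℕ

/-- The derivation relation `⇒_{G,m}` of an fRCCDGS in mode `m`. -/
def FRCCDGS.SysStep {T : Type} (G : FRCCDGS T) (m : Mode) (u v : Word T) : Prop :=
  ∃ P ∈ G.comps, ModeRel (frcStep P) m u v

/-- The language of an fRCCDGS in mode `m`. -/
def FRCCDGS.lang {T : Type} (G : FRCCDGS T) (m : Mode) : Language T :=
  langOf (G.SysStep m) G.start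

/-- An fRCCDGS without erasing productions. -/
def FRCCDGS.NonErasing {T : Type} (G : FRCCDGS T) : Prop :=
  ∀ P ∈ G.comps, ∀ r ∈ P, r.rhs ≠ []

/-- The class `fRCCD(m)`. -/
def fRCCD (T : Type) (m : Mode) : Set (Language T) :=
  {L | ∃ G : FRCCDGS T, L = G.lang m}

/-- The class `fRCCD^{-λ}(m)`. -/
def fRCCDne (T : Type) (m : Mode) : Set (Language T) :=
  {L | ∃ G : FRCCDGS T, G.NonErasing ∧ L = G.lang m}

/-- The class `fRCCDₙ(m)`: at most `n` components. -/
def fRCCDbound (T : Type) (n : ℕ) (m : Mode) : Set (Language T) :=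
  {L | ∃ G : FRCCDGS T, G.comps.length ≤ n ∧ L = G.lang m}

/-- The class `fRCCDₙ^{-λ}(m)`. -/
def fRCCDboundNE (T : Type) (n : ℕ) (m : Mode) : Set (Language T) :=
  {L | ∃ G : FRCCDGS T, G.comps.length ≤ n ∧ G.NonErasing ∧ L = G.lang m}

/-- The class `fRC` of languages of single forbidden random context grammars. -/
def fRC (T : Type) : Set (Language T) :=
  {L | ∃ (P : List (FRCRule T)) (S : ℕ), L = langOf (frcStep P) S}

/-- The class `fRC^{-λ}`. -/
def fRCne (T : Type) : Set (Language T) :=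
  {L | ∃ (P : List (FRCRule T)) (S : ℕ), (∀ r ∈ P, r.rhs ≠ []) ∧ L = langOf (frcStep P) S}

/-! ### Graph-controlled grammars with appearance checking -/

/-- A rule of a graph-controlled grammar: a context-free production together with
a success field and a failure field (sets of labels). The label of a rule is its
index in the rule list, so the labeling is automatically injective. -/
structure GCRule (T : Type) where
  prod : CFRule T
  succ : Finset ℕ
  fail : Finset ℕ

/-- A graph-controlled grammar with appearance checking. -/
structure GCGrammar (T : Type) where
  rules : List (GCRule T)
  init : Finset ℕ
  final : Finset ℕ
  start : ℕ

/-- One-step derivation on configurations `(sentential form, label)`: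
either the production of the current rule is applied and we move to a label of the
success field, or it is not applicable (its left-hand side does not occur) and we
move, without changing the sentential form, to a label of the failure field. -/
def GCGrammar.Step {T : Type} (G : GCGrammar T) :
    (Word T × ℕ) → (Word T × ℕ) → Prop := fun c c' =>
  ∃ r, G.rules[c.2]? = some r ∧
    ((r.prod.Rewrites c.1 c'.1 ∧ c'.2 ∈ r.succ) ∨
     (Sum.inl r.prod.lhs ∉ c.1 ∧ c'.1 = c.1 ∧ c'.2 ∈ r.fail))

/-- The language of a graph-controlled grammar: terminal words reachable from
`(S, ℓ₀)` with `ℓ₀` initial, in at least one step, ending in a final label. -/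
def GCGrammar.lang {T : Type} (G : GCGrammar T) : Language T :=
  {w | ∃ l₀ ∈ G.init, ∃ lf ∈ G.final,
    Relation.TransGen G.Step ([Sum.inl G.start], l₀) (encodeWord w, lf)}

/-- A graph-controlled grammar without erasing productions. -/
def GCGrammar.NonErasing {T : Type} (G : GCGrammar T) : Prop :=
  ∀ r ∈ G.rules, r.prod.rhs ≠ []

/-- The class `GC_ac`. -/
def GCac (T : Type) : Set (Language T) :=
  {L | ∃ G : GCGrammar T, L = G.lang}

/-- The class `GC_ac^{-λ}`. -/
def GCacNE (T : Type) : Set (Language T) :=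
  {L | ∃ G : GCGrammar T, G.NonErasing ∧ L = G.lang}

/-! ### Recursively enumerable languages -/

/-- The class `RE` of recursively enumerable languages over `T`:
those whose membership predicate is computably enumerable. -/
def REclass (T : Type) [Primcodable T] : Set (Language T) :=
  {L | REPred (· ∈ L)}

/-! ### CD grammar systems with random context entry conditions -/

/-- A component of a CD grammar system with random context entry conditions:
a set of context-free productions with permitting set `perm` and forbidding set `forb`. -/
structure RCComponent (T : Type) where
  rules : List (CFRule T)
  perm : Finset ℕ
  forb : Finset ℕ

/-- `u ⇒ᵢ^{m,rc} v` for a component with random context entry conditions. -/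
def RCComponent.Step {T : Type} (C : RCComponent T) (m : Mode) (u v : Word T) : Prop :=
  ModeRel (cfStep C.rules) m u v ∧
    (∀ A ∈ C.perm, Sum.inl A ∈ u) ∧ (∀ A ∈ C.forb, Sum.inl A ∉ u)

/-- A CD grammar system with random context entry conditions. -/
structure RCCDGS (T : Type) where
  comps : List (RCComponent T)
  start : ℕ

/-- The derivation relation `⇒_{G,m,rc}`. -/
def RCCDGS.SysStep {T : Type} (G : RCCDGS T) (m : Mode) (u v : Word T) : Prop :=
  ∃ C ∈ G.comps, C.Step m u v

/-- The language `L(G, m, rc)`. -/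
def RCCDGS.lang {T : Type} (G : RCCDGS T) (m : Mode) : Language T :=
  langOf (G.SysStep m) G.start

/-- No erasing productions. -/
def RCCDGS.NonErasing {T : Type} (G : RCCDGS T) : Prop :=
  ∀ C ∈ G.comps, ∀ r ∈ C.rules, r.rhs ≠ []

/-- The class `CD(m, rc)`. -/
def CDrc (T : Type) (m : Mode) : Set (Language T) :=
  {L | ∃ G : RCCDGS T, L = G.lang m}

/-- The class `CD^{-λ}(m, rc)`. -/
def CDrcNE (T : Type) (m : Mode) : Set (Language T) :=
  {L | ∃ G : RCCDGS T, G.NonErasing ∧ L = G.lang m}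

/-- The class `CD(m, frc)`: all permitting sets empty. -/
def CDfrc (T : Type) (m : Mode) : Set (Language T) :=
  {L | ∃ G : RCCDGS T, (∀ C ∈ G.comps, C.perm = ∅) ∧ L = G.lang m}

/-- The class `CD^{-λ}(m, frc)`. -/
def CDfrcNE (T : Type) (m : Mode) : Set (Language T) :=
  {L | ∃ G : RCCDGS T, (∀ C ∈ G.comps, C.perm = ∅) ∧ G.NonErasing ∧ L = G.lang m}

/-- The class `CD(m)` of ordinary CD grammar systems: all context conditions empty. -/
def CD (T : Type) (m : Mode) : Set (Language T) :=
  {L | ∃ G : RCCDGS T, (∀ C ∈ G.comps, C.perm = ∅ ∧ C.forb = ∅) ∧ L = G.lang m}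

/-- The class `CD^{-λ}(m)`. -/
def CDne (T : Type) (m : Mode) : Set (Language T) :=
  {L | ∃ G : RCCDGS T, (∀ C ∈ G.comps, C.perm = ∅ ∧ C.forb = ∅) ∧ G.NonErasing ∧
    L = G.lang m}

/-! ### CD grammar systems with priorities -/

/-- A CD grammar system with priorities: components with a strict order
(transitive and asymmetric) on (indices of) components. -/
structure PCDGS (T : Type) where
  comps : List (List (CFRule T))
  gt : Fin comps.length → Fin comps.length → Prop
  gt_trans : ∀ {i j k}, gt i j → gt j k → gt i k
  gt_asymm : ∀ {i j}, gt i j → ¬ gt j i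

theorem PCDGS.gt_wf {T : Type} (G : PCDGS T) : WellFounded G.gt := by
  have h1 : IsTrans (Fin G.comps.length) G.gt := ⟨fun _ _ _ => G.gt_trans⟩
  have h2 : IsIrrefl (Fin G.comps.length) G.gt := ⟨fun _ h => G.gt_asymm h h⟩
  exact Finite.wellFounded_of_trans_of_irrefl G.gt

/-- Start symbol comes separately (so that `gt` can mention `comps.length`). -/
structure PCDGSs (T : Type) extends PCDGS T where
  start : ℕ

/-- `G.Enabled m i x` : component `i` can make a prioritized `m`-mode step from `x`,
defined by recursion along the (well-founded) strict order `>`: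
component `i` is enabled iff it can make an (unprioritized) `m`-step and no
component of higher priority is enabled. -/
def PCDGS.Enabled {T : Type} (G : PCDGS T) (m : Mode) :
    Fin G.comps.length → Word T → Prop :=
  G.gt_wf.fix (C := fun _ => Word T → Prop) fun i ih x =>
    (∃ z, ModeRel (cfStep (G.comps.get i)) m x z) ∧
    ∀ (j : Fin G.comps.length) (h : G.gt j i), ¬ ih j h x

/-- The prioritized derivation relation `⇒_{m,>}`: `u ⇒ᵢ^{m,>} v` iff `u ⇒ᵢ^{m} v`
and no component of strictly higher priority can make a prioritized `m`-step from `u`. -/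
def PCDGS.PStep {T : Type} (G : PCDGS T) (m : Mode) (u v : Word T) : Prop :=
  ∃ i : Fin G.comps.length,
    ModeRel (cfStep (G.comps.get i)) m u v ∧
    ∀ j : Fin G.comps.length, G.gt j i → ¬ G.Enabled m j u

/-- The language `L_m(G)` of a PCDGS. -/
def PCDGSs.lang {T : Type} (G : PCDGSs T) (m : Mode) : Language T :=
  langOf (G.toPCDGS.PStep m) G.start

/-- No erasing productions. -/
def PCDGSs.NonErasing {T : Type} (G : PCDGSs T) : Prop :=
  ∀ P ∈ G.comps, ∀ r ∈ P, r.rhs ≠ []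

/-- The class `PCD(m)`. -/
def PCD (T : Type) (m : Mode) : Set (Language T) :=
  {L | ∃ G : PCDGSs T, L = G.lang m}

/-- The class `PCD^{-λ}(m)`. -/
def PCDne (T : Type) (m : Mode) : Set (Language T) :=
  {L | ∃ G : PCDGSs T, G.NonErasing ∧ L = G.lang m}

end GrammarSystems

open GrammarSystems

/-! The concrete CDGS with forbidden random context entry conditions:
nonterminals `A = 0`, `B = 1`, `C = 2`, terminal alphabet `{a}` modeled by `Unit`. -/

/-- `(P₁, F₁)` with `P₁ = {A → B, A → C, A → A}` and `F₁ = {B, C}`. -/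
def exC1 : RCComponent Unit where
  rules := [⟨0, [Sum.inl 1]⟩, ⟨0, [Sum.inl 2]⟩, ⟨0, [Sum.inl 0]⟩]
  perm := ∅
  forb := {1, 2}

/-- `(P₂, F₂)` with `P₂ = {B → AA, B → B}` and `F₂ = {A, C}`. -/
def exC2 : RCComponent Unit where
  rules := [⟨1, [Sum.inl 0, Sum.inl 0]⟩, ⟨1, [Sum.inl 1]⟩]
  perm := ∅
  forb := {0, 2}

/-- `(P₃, F₃)` with `P₃ = {C → a, C → C}` and `F₃ = {A, B}`. -/
def exC3 : RCComponent Unit where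
  rules := [⟨2, [Sum.inr ()]⟩, ⟨2, [Sum.inl 2]⟩]
  perm := ∅
  forb := {0, 1}

/-- The frcCDGS `G = ({A,B,C}, {a}, (P₁,F₁), (P₂,F₂), (P₃,F₃), A)`. -/
def exFRCCDGS : RCCDGS Unit where
  comps := [exC1, exC2, exC3]
  start := 0

/-! ### Auxiliary development -/

abbrev sA : Sym Unit := Sum.inl 0
abbrev sB : Sym Unit := Sum.inl 1
abbrev sC : Sym Unit := Sum.inl 2
abbrev sa : Sym Unit := Sum.inr ()

lemma iter_trans' {α : Type*} {r : α → α → Prop} :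
    ∀ {a b : ℕ} {u v w : α}, iter r a u v → iter r b v w → iter r (a + b) u w := by
  intro a
  induction a with
  | zero => intro b u v w h1 h2; cases h1; simpa using h2
  | succ a ih =>
    rintro b u v w ⟨x, hx, h1⟩ h2
    rw [Nat.add_right_comm]
    exact ⟨x, hx, ih h1 h2⟩

lemma cfStep_prefix {T : Type} {P : List (CFRule T)} (p : Word T) {u v : Word T}
    (h : cfStep P u v) : cfStep P (p ++ u) (p ++ v) := by
  obtain ⟨r, hr, x, z, rfl, rfl⟩ := h
  exact ⟨r, hr, p ++ x, z, by simp, by simp⟩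

lemma iter_prefix {T : Type} {P : List (CFRule T)} (p : Word T) :
    ∀ {n : ℕ} {u v : Word T}, iter (cfStep P) n u v →
      iter (cfStep P) n (p ++ u) (p ++ v) := by
  intro n
  induction n with
  | zero => intro u v h; cases h; rfl
  | succ n ih => rintro u v ⟨w, hw, h⟩; exact ⟨p ++ w, cfStep_prefix p hw, ih h⟩

lemma cfStep_mk {T : Type} {P : List (CFRule T)} {r : CFRule T} (hr : r ∈ P) (x z : Word T) :
    cfStep P (x ++ [Sum.inl r.lhs] ++ z) (x ++ r.rhs ++ z) := ⟨r, hr, x, z, rfl, rfl⟩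

lemma iter_dummy {P : List (CFRule Unit)} {X : ℕ}
    (hr : (⟨X, [Sum.inl X]⟩ : CFRule Unit) ∈ P) {m : ℕ} (hm : 1 ≤ m) (k : ℕ) :
    iter (cfStep P) k (List.replicate m (Sum.inl X)) (List.replicate m (Sum.inl X)) := by
  induction k with
  | zero => rfl
  | succ k ih =>
    refine ⟨_, ?_, ih⟩
    obtain ⟨m', rfl⟩ := Nat.exists_eq_succ_of_ne_zero (by omega : m ≠ 0)
    have := cfStep_mk hr [] (List.replicate m' (Sum.inl X))
    simpa [List.replicate_succ] using this

lemma iter_conv1 {P : List (CFRule Unit)} {L : ℕ} {s : Sym Unit}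
    (hr : (⟨L, [s]⟩ : CFRule Unit) ∈ P) :
    ∀ m, iter (cfStep P) m (List.replicate m (Sum.inl L)) (List.replicate m s) := by
  intro m
  induction m with
  | zero => rfl
  | succ m ih =>
    refine ⟨[s] ++ List.replicate m (Sum.inl L), ?_, ?_⟩
    · have := cfStep_mk hr [] (List.replicate m (Sum.inl L))
      simpa [List.replicate_succ] using this
    · have := iter_prefix [s] ih
      simpa [List.replicate_succ] using this

lemma iter_conv2 :
    ∀ m, iter (cfStep exC2.rules) m (List.replicate m sB) (List.replicate (2 * m) sA) := by
  intro m
  induction m with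
  | zero => rfl
  | succ m ih =>
    refine ⟨[sA, sA] ++ List.replicate m sB, ?_, ?_⟩
    · have := cfStep_mk (P := exC2.rules) (r := ⟨1, [sA, sA]⟩) (by simp [exC2]) []
        (List.replicate m sB)
      simpa [List.replicate_succ] using this
    · have := iter_prefix [sA, sA] ih
      have h2 : 2 * (m + 1) = (2 * m + 1) + 1 := by ring
      rw [h2]
      simpa [List.replicate_succ] using this

lemma pres_mem {T : Type} {x z y : Word T} {t : Sym T} {s : Sym T}
    (hs : s ∈ x ++ y ++ z) : s ∈ y ∨ s ∈ x ++ [t] ++ z := by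
  simp at hs ⊢; tauto

lemma pres1 {u v : Word Unit} (h : cfStep exC1.rules u v) :
    ((∀ s ∈ u, s = sA ∨ s = sB ∨ s = sC) → (∀ s ∈ v, s = sA ∨ s = sB ∨ s = sC)) ∧
      v.length = u.length := by
  obtain ⟨r, hr, x, z, rfl, rfl⟩ := h
  simp only [exC1, List.mem_cons, List.not_mem_nil, or_false] at hr
  rcases hr with rfl | rfl | rfl <;>
    refine ⟨fun hu s hs => ?_, by simp⟩ <;>
    · rcases pres_mem (t := (Sum.inl 0 : Sym Unit)) hs with hs | hs
      · simp at hs; simp [hs]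
      · exact hu s hs

lemma pres2 {u v : Word Unit} (h : cfStep exC2.rules u v) :
    ((∀ s ∈ u, s = sA ∨ s = sB) → (∀ s ∈ v, s = sA ∨ s = sB)) ∧
      v.count sA + 2 * v.count sB = u.count sA + 2 * u.count sB := by
  obtain ⟨r, hr, x, z, rfl, rfl⟩ := h
  simp only [exC2, List.mem_cons, List.not_mem_nil, or_false] at hr
  rcases hr with rfl | rfl <;>
    refine ⟨fun hu s hs => ?_, by simp (config := { decide := true }) [List.count_append, List.count_cons] <;> omega⟩ <;>
    · rcases pres_mem (t := (Sum.inl 1 : Sym Unit)) hs with hs | hs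
      · simp at hs; simp [hs]
      · exact hu s hs

lemma pres3 {u v : Word Unit} (h : cfStep exC3.rules u v) :
    ((∀ s ∈ u, s = sC ∨ s = sa) → (∀ s ∈ v, s = sC ∨ s = sa)) ∧
      v.length = u.length := by
  obtain ⟨r, hr, x, z, rfl, rfl⟩ := h
  simp only [exC3, List.mem_cons, List.not_mem_nil, or_false] at hr
  rcases hr with rfl | rfl <;>
    refine ⟨fun hu s hs => ?_, by simp⟩ <;>
    · rcases pres_mem (t := (Sum.inl 2 : Sym Unit)) hs with hs | hs
      · simp at hs; simp [hs]
      · exact hu s hs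

lemma iter_pres1 : ∀ {j : ℕ} {u v : Word Unit}, iter (cfStep exC1.rules) j u v →
    ((∀ s ∈ u, s = sA ∨ s = sB ∨ s = sC) → (∀ s ∈ v, s = sA ∨ s = sB ∨ s = sC)) ∧
      v.length = u.length := by
  intro j
  induction j with
  | zero => intro u v h; cases h; exact ⟨id, rfl⟩
  | succ j ih =>
    rintro u v ⟨w, hw, h⟩
    exact ⟨fun hu => (ih h).1 ((pres1 hw).1 hu), (ih h).2.trans (pres1 hw).2⟩

lemma iter_pres2 : ∀ {j : ℕ} {u v : Word Unit}, iter (cfStep exC2.rules) j u v →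
    ((∀ s ∈ u, s = sA ∨ s = sB) → (∀ s ∈ v, s = sA ∨ s = sB)) ∧
      v.count sA + 2 * v.count sB = u.count sA + 2 * u.count sB := by
  intro j
  induction j with
  | zero => intro u v h; cases h; exact ⟨id, rfl⟩
  | succ j ih =>
    rintro u v ⟨w, hw, h⟩
    exact ⟨fun hu => (ih h).1 ((pres2 hw).1 hu), (ih h).2.trans (pres2 hw).2⟩

lemma iter_pres3 : ∀ {j : ℕ} {u v : Word Unit}, iter (cfStep exC3.rules) j u v →
    ((∀ s ∈ u, s = sC ∨ s = sa) → (∀ s ∈ v, s = sC ∨ s = sa)) ∧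
      v.length = u.length := by
  intro j
  induction j with
  | zero => intro u v h; cases h; exact ⟨id, rfl⟩
  | succ j ih =>
    rintro u v ⟨w, hw, h⟩
    exact ⟨fun hu => (ih h).1 ((pres3 hw).1 hu), (ih h).2.trans (pres3 hw).2⟩

lemma exists_lhs {P : List (CFRule Unit)} {j : ℕ} {u v : Word Unit} (hj : 1 ≤ j)
    (h : iter (cfStep P) j u v) : ∃ r ∈ P, Sum.inl r.lhs ∈ u := by
  obtain ⟨j', rfl⟩ := Nat.exists_eq_succ_of_ne_zero (by omega : j ≠ 0)
  obtain ⟨w, ⟨r, hr, x, z, rfl, -⟩, -⟩ := h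
  exact ⟨r, hr, by simp⟩

/-- The invariant for the soundness direction. -/
def InvW (w : Word Unit) : Prop := ∃ n : ℕ,
  ((∀ s ∈ w, s = sA ∨ s = sB ∨ s = sC) ∧ w.length = 2 ^ n) ∨
  ((∀ s ∈ w, s = sA ∨ s = sB) ∧ w.count sA + 2 * w.count sB = 2 ^ (n + 1)) ∨
  ((∀ s ∈ w, s = sC ∨ s = sa) ∧ w.length = 2 ^ n)

instance : LawfulBEq (Sym Unit) where
  eq_of_beq {a b} h := by
    cases a <;> cases b
    · exact congrArg Sum.inl (eq_of_beq h)
    · exact absurd h (by exact Bool.false_ne_true)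
    · exact absurd h (by exact Bool.false_ne_true)
    · exact congrArg Sum.inr (eq_of_beq h)
  rfl {a} := by
    cases a with
    | inl n => exact (beq_self_eq_true n : _)
    | inr u => cases u; decide

lemma count_eq_length_of_all {w : Word Unit} {s : Sym Unit} (h : ∀ t ∈ w, t = s) :
    w.count s = w.length :=
  List.count_eq_length.mpr fun b hb => by simp [h b hb]

lemma count_eq_zero_of_not_mem {w : Word Unit} {s : Sym Unit} (h : s ∉ w) :
    w.count s = 0 := List.count_eq_zero.mpr h

lemma inv_step {k : ℕ} (hk : 1 ≤ k) {u v : Word Unit}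
    (h : exFRCCDGS.SysStep (.ge k) u v) (hu : InvW u) : InvW v := by
  obtain ⟨Cmp, hC, ⟨j, hj, hiter⟩, -, hforb⟩ := h
  have hj1 : 1 ≤ j := le_trans hk hj
  simp only [exFRCCDGS, List.mem_cons, List.not_mem_nil, or_false] at hC
  obtain ⟨n, h1 | h2 | h3⟩ := hu
  all_goals rcases hC with rfl | rfl | rfl
  -- case (i), component 1
  · exact ⟨n, Or.inl ⟨(iter_pres1 hiter).1 h1.1, (iter_pres1 hiter).2.trans h1.2⟩⟩
  -- case (i), component 2 : u is all B's
  · have hA : sA ∉ u := hforb 0 (by simp [exC2])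
    have hCc : sC ∉ u := hforb 2 (by simp [exC2])
    have hall : ∀ s ∈ u, s = sB := by
      intro s hs
      rcases h1.1 s hs with rfl | rfl | rfl
      · exact absurd hs hA
      · rfl
      · exact absurd hs hCc
    have hcA : u.count sA = 0 := count_eq_zero_of_not_mem hA
    have hcB : u.count sB = u.length := count_eq_length_of_all hall
    refine ⟨n, Or.inr (Or.inl ⟨(iter_pres2 hiter).1 (fun s hs => Or.inr (hall s hs)), ?_⟩)⟩
    rw [(iter_pres2 hiter).2, hcA, hcB, h1.2, pow_succ]
    ring
  -- case (i), component 3 : u is all C's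
  · have hA : sA ∉ u := hforb 0 (by simp [exC3])
    have hB : sB ∉ u := hforb 1 (by simp [exC3])
    have hall : ∀ s ∈ u, s = sC ∨ s = sa := by
      intro s hs
      rcases h1.1 s hs with rfl | rfl | rfl
      · exact absurd hs hA
      · exact absurd hs hB
      · exact Or.inl rfl
    exact ⟨n, Or.inr (Or.inr ⟨(iter_pres3 hiter).1 hall, (iter_pres3 hiter).2.trans h1.2⟩)⟩
  -- case (ii), component 1 : u is all A's
  · have hB : sB ∉ u := hforb 1 (by simp [exC1])
    have hall : ∀ s ∈ u, s = sA := by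
      intro s hs
      rcases h2.1 s hs with rfl | rfl
      · rfl
      · exact absurd hs hB
    have hcA : u.count sA = u.length := count_eq_length_of_all hall
    have hcB : u.count sB = 0 := count_eq_zero_of_not_mem hB
    have hlen : u.length = 2 ^ (n + 1) := by
      have := h2.2; rw [hcA, hcB] at this; omega
    refine ⟨n + 1, Or.inl ⟨(iter_pres1 hiter).1 (fun s hs => Or.inl (hall s hs)),
      (iter_pres1 hiter).2.trans hlen⟩⟩
  -- case (ii), component 2
  · exact ⟨n, Or.inr (Or.inl ⟨(iter_pres2 hiter).1 h2.1, (iter_pres2 hiter).2.trans h2.2⟩)⟩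
  -- case (ii), component 3 : impossible
  · have hA : sA ∉ u := hforb 0 (by simp [exC3])
    have hB : sB ∉ u := hforb 1 (by simp [exC3])
    have : (0 : ℕ) = 2 ^ (n + 1) := by
      have := h2.2
      rw [count_eq_zero_of_not_mem hA, count_eq_zero_of_not_mem hB] at this
      omega
    exact absurd this.symm (by positivity)
  -- case (iii), component 1 : impossible (u is all terminal)
  · have hCc : sC ∉ u := hforb 2 (by simp [exC1])
    obtain ⟨r, -, hmem⟩ := exists_lhs hj1 hiter
    rcases h3.1 _ hmem with h | h
    · rw [h] at hmem; exact absurd hmem hCc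
    · exact absurd h (by simp)
  -- case (iii), component 2 : impossible
  · have hCc : sC ∉ u := hforb 2 (by simp [exC2])
    obtain ⟨r, -, hmem⟩ := exists_lhs hj1 hiter
    rcases h3.1 _ hmem with h | h
    · rw [h] at hmem; exact absurd hmem hCc
    · exact absurd h (by simp)
  -- case (iii), component 3
  · exact ⟨n, Or.inr (Or.inr ⟨(iter_pres3 hiter).1 h3.1, (iter_pres3 hiter).2.trans h3.2⟩)⟩

lemma inv_rtg {k : ℕ} (hk : 1 ≤ k) {u v : Word Unit}
    (h : Relation.ReflTransGen (exFRCCDGS.SysStep (.ge k)) u v) (hu : InvW u) : InvW v := by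
  induction h with
  | refl => exact hu
  | tail _ hstep ih => exact inv_step hk hstep ih

/-! ### Construction lemmas for completeness -/

lemma sys1 {k : ℕ} {m : ℕ} (hm : 1 ≤ m) {s : Sym Unit}
    (hr : (⟨0, [s]⟩ : CFRule Unit) ∈ exC1.rules) :
    exFRCCDGS.SysStep (.ge k) (List.replicate m sA) (List.replicate m s) := by
  refine ⟨exC1, by simp [exFRCCDGS], ⟨k + m, Nat.le_add_right _ _, ?_⟩, by simp [exC1], ?_⟩
  · exact iter_trans' (iter_dummy (X := 0) (by simp [exC1]) hm k) (iter_conv1 hr m)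
  · intro A hA hmem
    rw [List.mem_replicate] at hmem
    fin_cases hA <;> simp_all

lemma sys2 {k : ℕ} {m : ℕ} (hm : 1 ≤ m) :
    exFRCCDGS.SysStep (.ge k) (List.replicate m sB) (List.replicate (2 * m) sA) := by
  refine ⟨exC2, by simp [exFRCCDGS], ⟨k + m, Nat.le_add_right _ _, ?_⟩, by simp [exC2], ?_⟩
  · exact iter_trans' (iter_dummy (X := 1) (by simp [exC2]) hm k) (iter_conv2 m)
  · intro A hA hmem
    rw [List.mem_replicate] at hmem
    fin_cases hA <;> simp_all

lemma sys3 {k : ℕ} {m : ℕ} (hm : 1 ≤ m) :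
    exFRCCDGS.SysStep (.ge k) (List.replicate m sC) (List.replicate m sa) := by
  refine ⟨exC3, by simp [exFRCCDGS], ⟨k + m, Nat.le_add_right _ _, ?_⟩, by simp [exC3], ?_⟩
  · exact iter_trans' (iter_dummy (X := 2) (by simp [exC3]) hm k)
      (iter_conv1 (s := sa) (by simp [exC3]) m)
  · intro A hA hmem
    rw [List.mem_replicate] at hmem
    fin_cases hA <;> simp_all

lemma reach {k : ℕ} : ∀ n : ℕ,
    Relation.ReflTransGen (exFRCCDGS.SysStep (.ge k)) [sA] (List.replicate (2 ^ n) sA) := by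
  intro n
  induction n with
  | zero => simpa using Relation.ReflTransGen.refl
  | succ n ih =>
    have h1 := sys1 (k := k) (m := 2 ^ n) Nat.one_le_two_pow (s := sB) (by simp [exC1])
    have h2 := sys2 (k := k) (m := 2 ^ n) Nat.one_le_two_pow
    have : (2 : ℕ) * 2 ^ n = 2 ^ (n + 1) := by rw [pow_succ]; ring
    rw [this] at h2
    exact (ih.tail h1).tail h2

/-- For every `k ≥ 1`, `L(G, ≥k, frc) = {a^{2ⁿ} : n ≥ 0}`. -/
theorem exFRCCDGS_lang (k : ℕ) (hk : 1 ≤ k) :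
    exFRCCDGS.lang (.ge k) = {w : List Unit | ∃ n : ℕ, w = List.replicate (2 ^ n) ()} := by
  ext w
  simp only [RCCDGS.lang, langOf, Set.mem_setOf_eq]
  constructor
  · intro h
    have hstart : InvW [sA] := ⟨0, Or.inl ⟨by simp, by simp⟩⟩
    have hinv := inv_rtg hk h hstart
    obtain ⟨n, h1 | h2 | h3⟩ := hinv
    · exfalso
      have hpos : 0 < (encodeWord w).length := by rw [h1.2]; positivity
      obtain ⟨s, hs⟩ := List.exists_mem_of_length_pos hpos
      obtain ⟨x, -, rfl⟩ := List.mem_map.1 hs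
      rcases h1.1 _ hs with h' | h' | h' <;> simp at h'
    · exfalso
      have hA : sA ∉ encodeWord w := by simp [encodeWord]
      have hB : sB ∉ encodeWord w := by simp [encodeWord]
      have h0 := h2.2
      rw [count_eq_zero_of_not_mem hA, count_eq_zero_of_not_mem hB] at h0
      have hp : 0 < 2 ^ (n + 1) := by positivity
      omega
    · refine ⟨n, ?_⟩
      have hlen : w.length = 2 ^ n := by simpa [encodeWord] using h3.2
      have := List.eq_replicate_of_mem (l := w) (a := ()) (fun b _ => by cases b; rfl)
      rw [hlen] at this
      exact this
  · rintro ⟨n, rfl⟩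
    have he : encodeWord (List.replicate (2 ^ n) ()) = List.replicate (2 ^ n) sa := by
      simp [encodeWord]
    show Relation.ReflTransGen (exFRCCDGS.SysStep (.ge k)) [Sum.inl exFRCCDGS.start]
      (encodeWord (List.replicate (2 ^ n) ()))
    rw [he]
    exact ((reach n).tail
      (sys1 Nat.one_le_two_pow (s := sC) (by simp [exC1]))).tail (sys3 Nat.one_le_two_pow)
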